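/- arXiv:2009.01870 — 2 statements merged into one kernel-verified Lean document; each statement's English description precedes it below -/
import Mathlib

section
/- Let m, n be integers and suppose the set {r*m + s*n : r, s ∈ ℕ} equals dℤ for some positive integer d. Then m < 0 < n (after possibly swapping so that m < n, assume m < n) and d = gcd(m, n). -/
/-!
Both `d` and `-d` are nonnegative combinations of `m` and `n`, so one generator is negative and
one is positive; with `m < n` this forces `m < 0 < n`. Moreover `d` divides `m` and `n` and is
itself a combination of them, so it is their gcd.
-/

section OrderedSemiring

variable {R : Type*} [Semiring R] [LinearOrder R] [IsOrderedRing R] {r s m n : R}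

lemma neg_or_neg_of_mul_add_mul_neg (hr : 0 ≤ r) (hs : 0 ≤ s) (h : r * m + s * n < 0) :
    m < 0 ∨ n < 0 := by
  by_contra! hmn
  exact h.not_ge (add_nonneg (mul_nonneg hr hmn.1) (mul_nonneg hs hmn.2))

lemma pos_or_pos_of_mul_add_mul_pos (hr : 0 ≤ r) (hs : 0 ≤ s) (h : 0 < r * m + s * n) :
    0 < m ∨ 0 < n := by
  by_contra! hmn
  exact h.not_ge (add_nonpos (mul_nonpos_of_nonneg_of_nonpos hr hmn.1)
    (mul_nonpos_of_nonneg_of_nonpos hs hmn.2))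

end OrderedSemiring

lemma Int.eq_gcd_of_dvd_of_eq_mul_add_mul {a b d x y : ℤ} (hd : 0 ≤ d) (hda : d ∣ a)
    (hdb : d ∣ b) (h : d = x * a + y * b) : d = Int.gcd a b :=
  Int.gcd_greatest hd hda hdb fun _ hea heb => h ▸ dvd_add (hea.mul_left x) (heb.mul_left y)

theorem stmt_1 (m n : ℤ) (hmn : m < n) (d : ℤ) (hd : 0 < d)
    (h : {x : ℤ | ∃ r s : ℕ, x = (r : ℤ) * m + (s : ℤ) * n} =
      {x : ℤ | ∃ k : ℤ, x = d * k}) :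
    m < 0 ∧ 0 < n ∧ d = (Int.gcd m n : ℤ) := by
  have mem (x : ℤ) : (∃ r s : ℕ, x = (r : ℤ) * m + (s : ℤ) * n) ↔ d ∣ x := Set.ext_iff.mp h x
  obtain ⟨r, s, hneg⟩ := (mem (-d)).mpr (dvd_neg.mpr dvd_rfl)
  obtain ⟨r', s', hpos⟩ := (mem d).mpr dvd_rfl
  have hm : m < 0 :=
    (neg_or_neg_of_mul_add_mul_neg r.cast_nonneg s.cast_nonneg (hneg ▸ neg_neg_of_pos hd)).elim
      id hmn.trans
  have hn : 0 < n :=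
    (pos_or_pos_of_mul_add_mul_pos r'.cast_nonneg s'.cast_nonneg (hpos ▸ hd)).elim
      (fun hm' => hm'.trans hmn) id
  have hdm : d ∣ m := (mem m).mp ⟨1, 0, by simp⟩
  have hdn : d ∣ n := (mem n).mp ⟨0, 1, by simp⟩
  exact ⟨hm, hn, Int.eq_gcd_of_dvd_of_eq_mul_add_mul hd.le hdm hdn hpos⟩
end

section
/- Let m and n be integers with m < 0 < n and gcd(m, n) = 1, and suppose m*n is even. Then for every integer r there exist natural numbers l, k with l*m + k*n = r and l + k even, and there exist natural numbers l', k' with l'*m + k'*n = r and l' + k' odd. -/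
/-!
Since `m < 0 < n`, an integer solution `(a, b)` of `a * m + b * n = r` (Bézout) can be moved along
`(a, b) ↦ (a + n, b - m)` until both coordinates are nonnegative. One more step keeps them
nonnegative and changes `a + b` by `n - m`, which is odd because coprimality and `Even (m * n)`
force `m` and `n` to have opposite parities.
-/

theorem IsCoprime.odd_sub_of_even_mul {m n : ℤ} (h : IsCoprime m n) (he : Even (m * n)) :
    Odd (n - m) := by
  by_contra hodd
  rw [Int.not_odd_iff_even, Int.even_sub] at hodd
  obtain ⟨hm, hn⟩ : Even m ∧ Even n := by rcases Int.even_mul.1 he with h2 | h2 <;> tauto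
  have h2 : IsUnit (2 : ℤ) := h.isUnit_of_dvd' hm.two_dvd hn.two_dvd
  norm_num [Int.isUnit_iff] at h2

theorem IsCoprime.exists_nat_mul_add_mul_eq {m n : ℤ} (hm : m < 0) (hn : 0 < n)
    (h : IsCoprime m n) (r : ℤ) : ∃ l k : ℕ, (l : ℤ) * m + k * n = r := by
  obtain ⟨u, v, huv⟩ := h
  set a := u * r
  set b := v * r
  set t := |a| + |b|
  have ht : 0 ≤ t := by positivity
  have ha : 0 ≤ a + t * n := by
    linarith [neg_abs_le a, abs_nonneg b, le_mul_of_one_le_right ht (show 1 ≤ n by omega)]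
  have hb : 0 ≤ b - t * m := by
    linarith [neg_abs_le b, abs_nonneg a, le_mul_of_one_le_right ht (show 1 ≤ -m by omega)]
  refine ⟨(a + t * n).toNat, (b - t * m).toNat, ?_⟩
  rw [Int.toNat_of_nonneg ha, Int.toNat_of_nonneg hb]
  linear_combination r * huv

theorem exists_nat_mul_add_mul_eq_sum_add_sub {m n r : ℤ} (hm : m < 0) (hn : 0 < n) {l k : ℕ}
    (hlk : (l : ℤ) * m + k * n = r) :
    ∃ l' k' : ℕ, (l' : ℤ) * m + k' * n = r ∧ ((l' + k' : ℕ) : ℤ) = (l + k : ℕ) + (n - m) := by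
  refine ⟨l + n.toNat, k + (-m).toNat, ?_, ?_⟩ <;>
    push_cast [Int.toNat_of_nonneg hn.le, Int.toNat_of_nonneg (neg_nonneg.2 hm.le)]
  · linear_combination hlk
  · ring

theorem stmt_14 (m n : ℤ) (hm : m < 0) (hn : 0 < n) (h : Int.gcd m n = 1)
    (he : Even (m * n)) (r : ℤ) :
    (∃ l k : ℕ, (l : ℤ) * m + (k : ℤ) * n = r ∧ Even (l + k)) ∧
      (∃ l' k' : ℕ, (l' : ℤ) * m + (k' : ℤ) * n = r ∧ Odd (l' + k')) := by
  have hcop : IsCoprime m n := Int.isCoprime_iff_gcd_eq_one.2 h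
  have hd : Odd (n - m) := hcop.odd_sub_of_even_mul he
  obtain ⟨l, k, hlk⟩ := hcop.exists_nat_mul_add_mul_eq hm hn r
  obtain ⟨l', k', hlk', hsum⟩ := exists_nat_mul_add_mul_eq_sum_add_sub hm hn hlk
  rcases Nat.even_or_odd (l + k) with heven | hodd
  · refine ⟨⟨l, k, hlk, heven⟩, l', k', hlk', ?_⟩
    rw [← Int.odd_coe_nat, hsum]
    exact ((Int.even_coe_nat _).2 heven).add_odd hd
  · refine ⟨⟨l', k', hlk', ?_⟩, l, k, hlk, hodd⟩
    rw [← Int.even_coe_nat, hsum]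
    exact ((Int.odd_coe_nat _).2 hodd).add_odd hd
end
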